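/- The composite of two winning strategies is winning: if σ : A ⇒ B and τ : B ⇒ C are winning, then for every s ∈ σ;τ with 𝒢_A(s↾A) = W one has 𝒢_C(s↾C) = W. -/

import Mathlib

inductive WL | W | L
deriving DecidableEq

open Classical

/-- A finite or infinite play. -/
def PlaySeq (X : Type*) : Type _ := List X ⊕ (ℕ → X)

/-- Restriction of an infinite sequence along a partial projection `p`: if only finitely
many moves are kept, the result is the finite list of kept moves in order; otherwise it is
the infinite subsequence of kept moves. -/
noncomputable def restrictSeq {X Y : Type*} (u : ℕ → X) (p : X → Option Y) : PlaySeq Y :=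
  if h : {n | (p (u n)).isSome}.Finite then
    .inl ((h.toFinset.sort (· ≤ ·)).filterMap fun n => p (u n))
  else
    .inr fun k =>
      (p (u (Nat.nth (fun n => (p (u n)).isSome) k))).getD
        (Classical.choice (by
          have h' : {n | (p (u n)).isSome}.Infinite := h
          obtain ⟨n, hn⟩ := h'.nonempty
          exact ⟨(p (u n)).get hn⟩))

/-- Restriction of a (finite or infinite) play along a partial projection. -/
noncomputable def restrictPlay {X Y : Type*} (s : PlaySeq X) (p : X → Option Y) :
    PlaySeq Y :=
  match s with
  | .inl l => .inl (l.filterMap p)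
  | .inr u => restrictSeq u p

/-- The finite prefix of length `n` of an infinite sequence. -/
def prefixList {X : Type*} (u : ℕ → X) (n : ℕ) : List X := (List.range n).map u

/-- Membership of a (finite or infinite) play in a strategy `σ` (a set of finite plays):
an infinite play belongs to `σ` when all its even-length finite prefixes do. -/
def memP {M : Type*} (σ : Set (List M)) : PlaySeq M → Prop
  | .inl l => l ∈ σ
  | .inr u => ∀ n, Even n → prefixList u n ∈ σ

/-- The winning function of an arrow game `A ⇒ B`: a play is winning iff winningness of
its restriction to `A` implies winningness of its restriction to `B`. -/
noncomputable def arrowWin {A B : Type*} (GA : PlaySeq A → WL) (GB : PlaySeq B → WL)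
    (s : PlaySeq (A ⊕ B)) : WL :=
  if GA (restrictPlay s Sum.getLeft?) = WL.W then GB (restrictPlay s Sum.getRight?)
  else WL.W

section Interaction

variable {MA MB MC : Type*}

/-- Projections of interaction moves to the various components. -/
def pA : MA ⊕ MB ⊕ MC → Option MA
  | .inl a => some a
  | _ => none

def pC : MA ⊕ MB ⊕ MC → Option MC
  | .inr (.inr c) => some c
  | _ => none

def pAB : MA ⊕ MB ⊕ MC → Option (MA ⊕ MB)
  | .inl a => some (.inl a)
  | .inr (.inl b) => some (.inr b)
  | _ => none

def pBC : MA ⊕ MB ⊕ MC → Option (MB ⊕ MC)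
  | .inr (.inl b) => some (.inl b)
  | .inr (.inr c) => some (.inr c)
  | _ => none

def pAC {MA MB MC : Type*} : MA ⊕ MB ⊕ MC → Option (MA ⊕ MC)
  | .inl a => some (.inl a)
  | .inr (.inr c) => some (.inr c)
  | _ => none

/-!
Restriction along partial projections is functorial: restricting along `p` and then along `q`
is restricting along `fun x => (p x).bind q`. Hence `s↾A = u↾A`, `s↾C = u↾C`, and the
restrictions of `u↾(A,B)` and `u↾(B,C)` to `B` are both `u↾B`. Winningness of `σ` turns
`𝒢_A(u↾A) = W` into `𝒢_B(u↾B) = W`, and winningness of `τ` turns that into `𝒢_C(u↾C) = W`.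

For infinite plays, functoriality rests on the enumeration of a subset `T` of an infinite
`S ⊆ ℕ` factoring through the enumeration of `S` (`Nat.nth_comp_of_strictMono`).
-/

theorem Finset.filterMap_sort_of_subset {α β : Type*} [LinearOrder α] {s t : Finset α}
    (f : α → Option β) (hst : s ⊆ t) (hf : ∀ a ∈ t, a ∉ s → f a = none) :
    t.sort.filterMap f = s.sort.filterMap f := by
  have hsort : t.sort.filter (· ∈ s) = s.sort :=
    (List.sortedLT_iff_pairwise.2 ((Finset.sortedLT_sort t).pairwise.filter _)).eq_of_mem_iff
      (Finset.sortedLT_sort s) fun a => by simpa using fun ha => hst ha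
  rw [← hsort, List.filterMap_filter]
  refine List.filterMap_congr fun a ha => ?_
  by_cases has : a ∈ s
  · simp [has]
  · simp [has, hf a ((Finset.mem_sort _).1 ha) has]

theorem restrictSeq_congr {X X' Y : Type*} {u : ℕ → X} {u' : ℕ → X'} {p : X → Option Y}
    {p' : X' → Option Y} (h : ∀ n, p (u n) = p' (u' n)) :
    restrictSeq u p = restrictSeq u' p' := by
  -- `restrictSeq u p` depends on `u` and `p` only through `n ↦ p (u n)`
  show restrictSeq (fun n => p (u n)) id = restrictSeq (fun n => p' (u' n)) id
  rw [funext h]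

theorem restrictSeq_of_finite {X Y : Type*} {u : ℕ → X} {p : X → Option Y}
    (h : {n | (p (u n)).isSome}.Finite) :
    restrictSeq u p = .inl (h.toFinset.sort.filterMap fun n => p (u n)) :=
  dif_pos h

theorem restrictSeq_eq_inr {X Y : Type*} {u : ℕ → X} {p : X → Option Y}
    (h : {n | (p (u n)).isSome}.Infinite) {w : ℕ → Y}
    (hw : ∀ k, p (u (Nat.nth (fun n => (p (u n)).isSome) k)) = some (w k)) :
    restrictSeq u p = .inr w := by
  refine (dif_neg h).trans (congrArg Sum.inr (funext fun k => ?_))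
  simp [hw]

theorem exists_restrictSeq_eq_inr {X Y : Type*} {u : ℕ → X} {p : X → Option Y}
    (h : {n | (p (u n)).isSome}.Infinite) :
    ∃ w : ℕ → Y, restrictSeq u p = .inr w ∧
      ∀ k, p (u (Nat.nth (fun n => (p (u n)).isSome) k)) = some (w k) :=
  ⟨_, restrictSeq_eq_inr h fun k => (Option.some_get (Nat.nth_mem_of_infinite h k)).symm,
    fun k => (Option.some_get (Nat.nth_mem_of_infinite h k)).symm⟩

theorem restrictSeq_comp_of_strictMono {X Y : Type*} {v : ℕ → X} {p : X → Option Y} {g : ℕ → ℕ}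
    (hg : StrictMono g) (hp : ∀ n, (p (v n)).isSome → n ∈ Set.range g) :
    restrictSeq (fun k => v (g k)) p = restrictSeq v p := by
  set T := {n | (p (v n)).isSome}
  have himage : g '' {k | (p (v (g k))).isSome} = T := by
    ext n
    constructor
    · rintro ⟨k, hk, rfl⟩
      exact hk
    · intro hn
      obtain ⟨k, rfl⟩ := hp n hn
      exact ⟨k, hn, rfl⟩
  by_cases hT : T.Finite
  · have hK : {k | (p (v (g k))).isSome}.Finite := hT.preimage hg.injective.injOn
    have hmap : hK.toFinset.map ⟨g, hg.injective⟩ = hT.toFinset := by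
      simp [← Finset.coe_inj, ← himage]
    rw [restrictSeq_of_finite hK, restrictSeq_of_finite hT, ← hmap,
      ← (hg.strictMonoOn _).map_finsetSort, List.filterMap_map]
    rfl
  · have hK : {k | (p (v (g k))).isSome}.Infinite := fun hK => hT (himage ▸ hK.image g)
    obtain ⟨w, hw, hwp⟩ := exists_restrictSeq_eq_inr hT
    rw [hw]
    refine restrictSeq_eq_inr hK fun k => ?_
    rw [← hwp, Nat.nth_comp_of_strictMono hg hp fun hfin => (hT hfin).elim]

theorem restrictPlay_restrictSeq {X Y Z : Type*} (v : ℕ → X) (p : X → Option Y)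
    (q : Y → Option Z) :
    restrictPlay (restrictSeq v p) q = restrictSeq v fun x => (p x).bind q := by
  have hsupp : ∀ n, ((p (v n)).bind q).isSome → (p (v n)).isSome := fun n h => by
    cases hpv : p (v n) <;> simp_all
  by_cases hS : {n | (p (v n)).isSome}.Finite
  · rw [restrictSeq_of_finite hS,
      restrictSeq_of_finite (p := fun x => (p x).bind q) (hS.subset fun n => hsupp n)]
    refine congrArg Sum.inl ?_
    rw [List.filterMap_filterMap]
    refine Finset.filterMap_sort_of_subset _ (by simpa using hsupp) fun n _ hn => ?_
    simpa using hn
  · obtain ⟨w, hw, hwp⟩ := exists_restrictSeq_eq_inr hS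
    rw [hw]
    calc restrictSeq w q
        = restrictSeq (fun k => v (Nat.nth (fun n => (p (v n)).isSome) k)) fun x => (p x).bind q :=
          restrictSeq_congr fun k => by simp [hwp]
      _ = _ := restrictSeq_comp_of_strictMono (Nat.nth_strictMono hS) fun n hn =>
          Nat.range_nth_of_infinite hS ▸ hsupp n hn

theorem restrictPlay_restrictPlay {X Y Z : Type*} (s : PlaySeq X) (p : X → Option Y)
    (q : Y → Option Z) :
    restrictPlay (restrictPlay s p) q = restrictPlay s fun x => (p x).bind q := by
  cases s with
  | inl l => exact congrArg Sum.inl (List.filterMap_filterMap ..)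
  | inr v => exact restrictPlay_restrictSeq v p q

theorem eq_W_of_arrowWin_eq_W {A B : Type*} {GA : PlaySeq A → WL} {GB : PlaySeq B → WL}
    {s : PlaySeq (A ⊕ B)} (h : arrowWin GA GB s = WL.W)
    (hA : GA (restrictPlay s Sum.getLeft?) = WL.W) : GB (restrictPlay s Sum.getRight?) = WL.W := by
  rwa [arrowWin, if_pos hA] at h

def pB : MA ⊕ MB ⊕ MC → Option MB
  | .inr (.inl b) => some b
  | _ => none

theorem pAB_bind_getLeft : (fun x => (pAB x).bind Sum.getLeft?) = (pA : MA ⊕ MB ⊕ MC → _) :=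
  funext fun x => by rcases x with _ | _ | _ <;> rfl

theorem pAB_bind_getRight : (fun x => (pAB x).bind Sum.getRight?) = (pB : MA ⊕ MB ⊕ MC → _) :=
  funext fun x => by rcases x with _ | _ | _ <;> rfl

theorem pBC_bind_getLeft : (fun x => (pBC x).bind Sum.getLeft?) = (pB : MA ⊕ MB ⊕ MC → _) :=
  funext fun x => by rcases x with _ | _ | _ <;> rfl

theorem pBC_bind_getRight : (fun x => (pBC x).bind Sum.getRight?) = (pC : MA ⊕ MB ⊕ MC → _) :=
  funext fun x => by rcases x with _ | _ | _ <;> rfl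

theorem pAC_bind_getLeft : (fun x => (pAC x).bind Sum.getLeft?) = (pA : MA ⊕ MB ⊕ MC → _) :=
  funext fun x => by rcases x with _ | _ | _ <;> rfl

theorem pAC_bind_getRight : (fun x => (pAC x).bind Sum.getRight?) = (pC : MA ⊕ MB ⊕ MC → _) :=
  funext fun x => by rcases x with _ | _ | _ <;> rfl

/-- The composite of two winning strategies is winning: if `σ : A ⇒ B` and `τ : B ⇒ C`
are winning, then for every play `s ∈ σ;τ` — i.e. every restriction `s = u↾(A,C)` of an
interaction `u ∈ σ‖τ` — if `𝒢_A(s↾A) = W` then `𝒢_C(s↾C) = W`. -/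
theorem composite_winning
    (GA : PlaySeq MA → WL) (GB : PlaySeq MB → WL) (GC : PlaySeq MC → WL)
    (σ : Set (List (MA ⊕ MB))) (τ : Set (List (MB ⊕ MC)))
    (hσwin : ∀ pl, memP σ pl → arrowWin GA GB pl = WL.W)
    (hτwin : ∀ pl, memP τ pl → arrowWin GB GC pl = WL.W) :
    ∀ (u : PlaySeq (MA ⊕ MB ⊕ MC)) (s : PlaySeq (MA ⊕ MC)),
      memP σ (restrictPlay u pAB) → memP τ (restrictPlay u pBC) →
      s = restrictPlay u pAC →
      GA (restrictPlay s Sum.getLeft?) = WL.W →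
      GC (restrictPlay s Sum.getRight?) = WL.W := by
  rintro u s hσ hτ rfl hA
  rw [restrictPlay_restrictPlay, pAC_bind_getLeft] at hA
  rw [restrictPlay_restrictPlay, pAC_bind_getRight]
  have hB := eq_W_of_arrowWin_eq_W (hσwin _ hσ)
    (by rwa [restrictPlay_restrictPlay, pAB_bind_getLeft])
  rw [restrictPlay_restrictPlay, pAB_bind_getRight] at hB
  have hC := eq_W_of_arrowWin_eq_W (hτwin _ hτ)
    (by rwa [restrictPlay_restrictPlay, pBC_bind_getLeft])
  rwa [restrictPlay_restrictPlay, pBC_bind_getRight] at hC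

end Interaction
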